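/- arXiv:2407.17363 — 6 statements merged into one kernel-verified Lean document; each statement's English description precedes it below -/
import Mathlib

section
/- Let G be a minimal counterexample to the statement 'for every f : V(G) → ℝ with f(v) ≤ 1/(d(v)+1/2) for all v and ∑_{v∈K} f(v) ≤ 1 for all cliques K, α(G) ≥ ∑_v f(v)'. Then for every vertex v of G: f(v) + ∑_{u∈N(v)} f(u) > 1. -/
/-- A set of vertices is independent if its vertices are pairwise non-adjacent. -/
def SimpleGraph.IsIndepSet' {V : Type*} (G : SimpleGraph V) (s : Set V) : Prop :=
  s.Pairwise (fun u v => ¬ G.Adj u v)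

open scoped Classical

/-!
Delete the closed neighbourhood `N[v]` of `v`. In the remaining induced graph degrees only drop
and cliques are cliques of `G`, so the restriction of `f` still satisfies both hypotheses, and by
minimality that graph has an independent set `s` with `∑_{V ∖ N[v]} f ≤ |s|`. Adding `v` keeps
`s` independent, so if `f(N[v]) ≤ 1` we get an independent set of size
`|s| + 1 ≥ ∑_{V ∖ N[v]} f + f(N[v]) = ∑ f`, contradicting that `G` is a counterexample.
-/

namespace SimpleGraph

variable {V : Type*} {G : SimpleGraph V} {s : Set V}

theorem IsIndepSet'.image_val_of_induce {t : Set s} (ht : (G.induce s).IsIndepSet' t) :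
    G.IsIndepSet' (Subtype.val '' t) := by
  rintro _ ⟨a, ha, rfl⟩ _ ⟨b, hb, rfl⟩ hab
  exact ht ha hb (ne_of_apply_ne _ hab)

theorem IsIndepSet'.insert_of_forall_not_adj {t : Set V} {v : V} (ht : G.IsIndepSet' t)
    (hv : ∀ w ∈ t, ¬ G.Adj v w) : G.IsIndepSet' (insert v t) :=
  ht.insert fun w hw _ ↦ ⟨hv w hw, fun h ↦ hv w hw h.symm⟩

theorem le_one_div_degree_induce_add_half {f : V → ℝ}
    [∀ v, Fintype (G.neighborSet v)] [∀ w, Fintype ((G.induce s).neighborSet w)]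
    (hf : ∀ v, f v ≤ 1 / (G.degree v + 1 / 2)) (w : s) :
    f w ≤ 1 / ((G.induce s).degree w + 1 / 2) := by
  refine (hf w).trans (one_div_le_one_div_of_le (by positivity) ?_)
  exact add_le_add_left (Nat.cast_le.mpr ((Copy.induce G s).degree_le w)) _

theorem sum_induce_clique_le_one {f : V → ℝ}
    (hcliques : ∀ K : Finset V, G.IsClique (K : Set V) → ∑ v ∈ K, f v ≤ 1)
    (K : Finset s) (hK : (G.induce s).IsClique (K : Set s)) : ∑ w ∈ K, f w ≤ 1 := by
  refine (Finset.sum_map K (Function.Embedding.subtype _) f).symm.trans_le (hcliques _ ?_)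
  rw [Finset.coe_map]
  exact isClique_induce_iff.mp hK

end SimpleGraph

open SimpleGraph

theorem stmt_7_general {V : Type} [Fintype V] (G : SimpleGraph V)
    [DecidableRel G.Adj] (f : V → ℝ)
    (hf : ∀ v, f v ≤ 1 / (G.degree v + 1 / 2))
    (hcliques : ∀ K : Finset V, G.IsClique (K : Set V) → ∑ v ∈ K, f v ≤ 1)
    (hcounter : ∀ s : Finset V, G.IsIndepSet' (s : Set V) → (s.card : ℝ) < ∑ v, f v)
    (hmin : ∀ (W : Type) [Fintype W] [DecidableEq W] (H : SimpleGraph W)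
      [DecidableRel H.Adj], Fintype.card W < Fintype.card V →
      ∀ g : W → ℝ, (∀ w, g w ≤ 1 / (H.degree w + 1 / 2)) →
      (∀ K : Finset W, H.IsClique (K : Set W) → ∑ w ∈ K, g w ≤ 1) →
      ∃ s : Finset W, H.IsIndepSet' (s : Set W) ∧ ∑ w, g w ≤ s.card) :
    ∀ v : V, 1 < f v + ∑ u ∈ G.neighborFinset v, f u := by
  intro v
  by_contra! hle
  set N : Finset V := insert v (G.neighborFinset v)
  have hvN : v ∈ N := Finset.mem_insert_self _ _
  have hcard : Fintype.card ((Nᶜ : Finset V) : Set V) < Fintype.card V :=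
    (Fintype.card_coe _).trans_lt (Finset.card_lt_univ_of_notMem (Finset.notMem_compl.mpr hvN))
  obtain ⟨s, hs, hsum⟩ := hmin _ (G.induce (Nᶜ : Finset V)) hcard (fun w ↦ f w)
    (le_one_div_degree_induce_add_half hf) (sum_induce_clique_le_one hcliques)
  rw [← Finset.sum_subtype (p := (· ∈ ((Nᶜ : Finset V) : Set V))) Nᶜ (fun _ ↦ Iff.rfl) f]
    at hsum
  have hvs : v ∉ s.map (Function.Embedding.subtype _) := fun hv ↦ by
    obtain ⟨w, -, hwv⟩ := Finset.mem_map.mp hv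
    exact Finset.mem_compl.mp w.2 (by rwa [← hwv] at hvN)
  have hindep : G.IsIndepSet' ↑(insert v (s.map (Function.Embedding.subtype _))) := by
    rw [Finset.coe_insert, Finset.coe_map]
    refine hs.image_val_of_induce.insert_of_forall_not_adj ?_
    rintro _ ⟨w, -, rfl⟩ hvw
    exact Finset.mem_compl.mp w.2 <| Finset.mem_insert_of_mem <| (G.mem_neighborFinset _ _).mpr hvw
  have hlt := hcounter _ hindep
  rw [Finset.card_insert_of_notMem hvs, Finset.card_map, ← Finset.sum_add_sum_compl N,
    Finset.sum_insert (G.notMem_neighborFinset_self v)] at hlt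
  push_cast at hlt
  linarith

theorem stmt_7 {V : Type} [Fintype V] [DecidableEq V] (G : SimpleGraph V)
    [DecidableRel G.Adj] (f : V → ℝ)
    (hf : ∀ v, f v ≤ 1 / (G.degree v + 1 / 2))
    (hcliques : ∀ K : Finset V, G.IsClique (K : Set V) → ∑ v ∈ K, f v ≤ 1)
    (hcounter : ∀ s : Finset V, G.IsIndepSet' (s : Set V) → (s.card : ℝ) < ∑ v, f v)
    (hmin : ∀ (W : Type) [Fintype W] [DecidableEq W] (H : SimpleGraph W)
      [DecidableRel H.Adj], Fintype.card W < Fintype.card V →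
      ∀ g : W → ℝ, (∀ w, g w ≤ 1 / (H.degree w + 1 / 2)) →
      (∀ K : Finset W, H.IsClique (K : Set W) → ∑ w ∈ K, g w ≤ 1) →
      ∃ s : Finset W, H.IsIndepSet' (s : Set W) ∧ ∑ w, g w ≤ s.card) :
    ∀ v : V, 1 < f v + ∑ u ∈ G.neighborFinset v, f u :=
  stmt_7_general G f hf hcliques hcounter hmin
end

section
/- Let G be a finite simple graph, f : V(G) → ℝ with f(v) ≤ 1/(d(v)+1/2) for all v. Suppose v is a vertex with d(v) ≤ d(u) for every neighbor u of v, and f(v) + ∑_{u∈N(v)} f(u) > 1. Then fewer than (d(v) + 3/2)/2 neighbors of v have degree strictly greater than d(v). -/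
open scoped Classical

/-!
Let `d = d(v)` and let `k` count the neighbours of higher degree. Each of them has
`f ≤ 1/(d + 3/2)`, while `v` and its other `d - k` neighbours have degree exactly `d`, hence
`f ≤ 1/(d + 1/2)`. So `1 < (d + 1 - k)/(d + 1/2) + k/(d + 3/2)`; clearing denominators, this is
linear in `k` and says `k < (d + 3/2)/2`.
-/

lemma lt_of_one_lt_div_add_div {d k : ℝ} (hd : -1 / 2 < d)
    (h : 1 < (d + 1 - k) / (d + 1 / 2) + k / (d + 3 / 2)) : k < (d + 3 / 2) / 2 := by
  have h₁ : 0 < d + 1 / 2 := by linarith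
  have h₃ : 0 < d + 3 / 2 := by linarith
  rw [div_add_div _ _ h₁.ne' h₃.ne', one_lt_div (mul_pos h₁ h₃)] at h
  linarith

namespace SimpleGraph

open Finset

variable {V : Type*} [Fintype V] (G : SimpleGraph V) [DecidableRel G.Adj] {f : V → ℝ}

lemma le_of_degree_lt (hf : ∀ v, f v ≤ 1 / (G.degree v + 1 / 2)) {u v : V}
    (h : G.degree v < G.degree u) : f u ≤ 1 / (G.degree v + 3 / 2) := by
  have hdeg : (G.degree v : ℝ) + 1 ≤ G.degree u := by exact_mod_cast h
  calc f u ≤ 1 / (G.degree u + 1 / 2) := hf u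
    _ ≤ 1 / (G.degree v + 3 / 2) := one_div_le_one_div_of_le (by positivity) (by linarith)

lemma sum_neighborFinset_le (hf : ∀ v, f v ≤ 1 / (G.degree v + 1 / 2)) (v : V)
    (hmin : ∀ u ∈ G.neighborFinset v, G.degree v ≤ G.degree u) :
    ∑ u ∈ G.neighborFinset v, f u ≤
      (G.degree v - #{u ∈ G.neighborFinset v | G.degree v < G.degree u}) / (G.degree v + 1 / 2) +
        #{u ∈ G.neighborFinset v | G.degree v < G.degree u} / (G.degree v + 3 / 2) := by
  set A := {u ∈ G.neighborFinset v | G.degree v < G.degree u}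
  set B := {u ∈ G.neighborFinset v | ¬G.degree v < G.degree u}
  have hcard : (#B : ℝ) = G.degree v - #A := by
    rw [eq_sub_iff_add_eq, add_comm, ← card_neighborFinset_eq_degree]
    exact_mod_cast card_filter_add_card_filter_not _
  have hA : ∑ u ∈ A, f u ≤ #A * (1 / (G.degree v + 3 / 2)) := by
    refine (sum_le_card_nsmul A f _ fun u hu ↦ ?_).trans_eq (nsmul_eq_mul _ _)
    exact G.le_of_degree_lt hf (mem_filter.1 hu).2
  have hB : ∑ u ∈ B, f u ≤ #B * (1 / (G.degree v + 1 / 2)) := by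
    refine (sum_le_card_nsmul B f _ fun u hu ↦ ?_).trans_eq (nsmul_eq_mul _ _)
    obtain ⟨hadj, hle⟩ := mem_filter.1 hu
    rw [← le_antisymm (not_lt.1 hle) (hmin u hadj)]
    exact hf u
  rw [← sum_filter_add_sum_filter_not _ (fun u ↦ G.degree v < G.degree u), ← hcard]
  rw [mul_one_div] at hA hB
  linarith

end SimpleGraph

theorem stmt_9_general {V : Type*} [Fintype V] (G : SimpleGraph V)
    [DecidableRel G.Adj] (f : V → ℝ)
    (hf : ∀ v, f v ≤ 1 / (G.degree v + 1 / 2)) (v : V)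
    (hmin : ∀ u ∈ G.neighborFinset v, G.degree v ≤ G.degree u)
    (hsum : 1 < f v + ∑ u ∈ G.neighborFinset v, f u) :
    (((G.neighborFinset v).filter (fun u => G.degree v < G.degree u)).card : ℝ) <
      ((G.degree v : ℝ) + 3 / 2) / 2 := by
  refine lt_of_one_lt_div_add_div (by linarith [(G.degree v).cast_nonneg (α := ℝ)]) ?_
  have hneighbors := G.sum_neighborFinset_le hf v hmin
  have hv := hf v
  rw [add_sub_right_comm, add_div]
  linarith

theorem stmt_9 {V : Type*} [Fintype V] [DecidableEq V] (G : SimpleGraph V)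
    [DecidableRel G.Adj] (f : V → ℝ)
    (hf : ∀ v, f v ≤ 1 / (G.degree v + 1 / 2)) (v : V)
    (hmin : ∀ u ∈ G.neighborFinset v, G.degree v ≤ G.degree u)
    (hsum : 1 < f v + ∑ u ∈ G.neighborFinset v, f u) :
    (((G.neighborFinset v).filter (fun u => G.degree v < G.degree u)).card : ℝ) <
      ((G.degree v : ℝ) + 3 / 2) / 2 :=
  stmt_9_general G f hf v hmin hsum
end

section
/- Let G be a finite simple graph and f : V(G) → ℝ with f(v) ≤ 1/(d(v)+1/2) for all v. Suppose u and w are non-adjacent vertices with d(u) ≤ d(x) for all x ∈ N(u), d(w) ≤ d(x) for all x ∈ N(w), and f(u) + f(w) + ∑_{x∈N(u)∪N(w)} f(x) > 2. Then N(u) ∩ N(w) = ∅. -/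
open scoped Classical

/-!
Suppose `v` is a common neighbour and, by symmetry, `a := d(u) ≤ b := d(w)`. Every vertex of
`N(w)` has degree at least `b`, so `f w + ∑_{N(w)} f ≤ (b + 1) / (b + 1/2)`. Every vertex of
`N(u) \ N(w)` has degree at least `a`, and this set misses `v`, so
`f u + ∑_{N(u) \ N(w)} f ≤ a / (a + 1/2)`. The total is
`2 - (1/2) / (a + 1/2) + (1/2) / (b + 1/2) ≤ 2`.
-/

open Finset

theorem Finset.sum_le_card_div_of_le_one_div {ι : Type*} {s : Finset ι} {f g : ι → ℝ} {c : ℝ}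
    (hc : 0 < c) (hf : ∀ x ∈ s, f x ≤ 1 / g x) (hg : ∀ x ∈ s, c ≤ g x) :
    ∑ x ∈ s, f x ≤ #s / c := by
  have hfc : ∀ x ∈ s, f x ≤ 1 / c := fun x hx =>
    (hf x hx).trans (one_div_le_one_div_of_le hc (hg x hx))
  simpa [div_eq_mul_inv] using sum_le_card_nsmul s f (1 / c) hfc

theorem Finset.card_sdiff_add_one_le {α : Type*} [DecidableEq α] {s t : Finset α}
    (h : (s ∩ t).Nonempty) : #(s \ t) + 1 ≤ #s := by
  rw [← card_sdiff_add_card_inter s t]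
  exact Nat.add_le_add_left h.card_pos _

theorem div_add_half_add_add_one_div_add_half_le_two {a b : ℝ} (ha : 0 ≤ a) (hab : a ≤ b) :
    a / (a + 1 / 2) + (b + 1) / (b + 1 / 2) ≤ 2 := by
  rw [div_add_div _ _ (by positivity) (by linarith), div_le_iff₀ (by nlinarith)]
  nlinarith

namespace SimpleGraph

variable {V : Type*} [Fintype V] [DecidableEq V] {G : SimpleGraph V} [DecidableRel G.Adj]

theorem add_add_sum_neighborFinset_union_le_two {f : V → ℝ}
    (hf : ∀ v, f v ≤ 1 / (G.degree v + 1 / 2)) {u w : V}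
    (hu : ∀ x ∈ G.neighborFinset u, G.degree u ≤ G.degree x)
    (hw : ∀ x ∈ G.neighborFinset w, G.degree w ≤ G.degree x)
    (hdeg : G.degree u ≤ G.degree w)
    (hcommon : (G.neighborFinset u ∩ G.neighborFinset w).Nonempty) :
    f u + f w + ∑ x ∈ G.neighborFinset u ∪ G.neighborFinset w, f x ≤ 2 := by
  have hcard : (#(G.neighborFinset u \ G.neighborFinset w) : ℝ) ≤ G.degree u - 1 := by
    have := card_sdiff_add_one_le hcommon
    rw [card_neighborFinset_eq_degree] at this
    rw [le_sub_iff_add_le]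
    exact_mod_cast this
  have hsum_u : ∑ x ∈ G.neighborFinset u \ G.neighborFinset w, f x
      ≤ (G.degree u - 1) / (G.degree u + 1 / 2) := by
    refine (sum_le_card_div_of_le_one_div (by positivity) (fun x _ => hf x)
      (c := G.degree u + 1 / 2) fun x hx => ?_).trans (by gcongr)
    have := hu x (mem_sdiff.mp hx).1
    gcongr
  have hsum_w : ∑ x ∈ G.neighborFinset w, f x ≤ G.degree w / (G.degree w + 1 / 2) := by
    refine (sum_le_card_div_of_le_one_div (by positivity) (fun x _ => hf x)
      (c := G.degree w + 1 / 2) fun x hx => ?_).trans_eq (by rw [card_neighborFinset_eq_degree])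
    have := hw x hx
    gcongr
  have hsplit : ∑ x ∈ G.neighborFinset u ∪ G.neighborFinset w, f x
      = ∑ x ∈ G.neighborFinset w, f x + ∑ x ∈ G.neighborFinset u \ G.neighborFinset w, f x := by
    rw [union_comm, ← union_sdiff_self_eq_union, sum_union disjoint_sdiff]
  calc f u + f w + ∑ x ∈ G.neighborFinset u ∪ G.neighborFinset w, f x
      ≤ (1 + (G.degree u - 1)) / (G.degree u + 1 / 2)
          + (G.degree w + 1) / (G.degree w + 1 / 2) := by
        rw [add_div, add_div, hsplit]
        linarith [hf u, hf w]
    _ ≤ 2 := by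
        rw [add_sub_cancel]
        exact div_add_half_add_add_one_div_add_half_le_two (by positivity) (by exact_mod_cast hdeg)

end SimpleGraph

theorem stmt_10_general {V : Type*} [Fintype V] [DecidableEq V] (G : SimpleGraph V)
    [DecidableRel G.Adj] (f : V → ℝ)
    (hf : ∀ v, f v ≤ 1 / (G.degree v + 1 / 2)) (u w : V)
    (hu : ∀ x ∈ G.neighborFinset u, G.degree u ≤ G.degree x)
    (hw : ∀ x ∈ G.neighborFinset w, G.degree w ≤ G.degree x)
    (hsum : 2 < f u + f w + ∑ x ∈ G.neighborFinset u ∪ G.neighborFinset w, f x) :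
    G.neighborFinset u ∩ G.neighborFinset w = ∅ := by
  by_contra h
  have hcommon := nonempty_iff_ne_empty.mpr h
  rcases le_total (G.degree u) (G.degree w) with hdeg | hdeg
  · exact hsum.not_ge (G.add_add_sum_neighborFinset_union_le_two hf hu hw hdeg hcommon)
  · have := G.add_add_sum_neighborFinset_union_le_two hf hw hu hdeg (by rwa [inter_comm])
    rw [union_comm] at this
    linarith

theorem stmt_10 {V : Type*} [Fintype V] [DecidableEq V] (G : SimpleGraph V)
    [DecidableRel G.Adj] (f : V → ℝ)
    (hf : ∀ v, f v ≤ 1 / (G.degree v + 1 / 2)) (u w : V) (huw : u ≠ w)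
    (hadj : ¬ G.Adj u w)
    (hu : ∀ x ∈ G.neighborFinset u, G.degree u ≤ G.degree x)
    (hw : ∀ x ∈ G.neighborFinset w, G.degree w ≤ G.degree x)
    (hsum : 2 < f u + f w + ∑ x ∈ G.neighborFinset u ∪ G.neighborFinset w, f x) :
    G.neighborFinset u ∩ G.neighborFinset w = ∅ :=
  stmt_10_general G f hf u w hu hw hsum
end

section
/- Let δ ≥ 4 be a real number and define q_δ(ℓ, k) = ℓ + 0.5 − k/(δ + 0.5) − (ℓ(δ + 1.5 − k) + 0.5k)/(δ + 2 − ℓ). If 2 ≤ ℓ ≤ δ/2 and k ≥ (δ+1)/2, then q_δ(ℓ, k) ≥ 0. -/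
theorem stmt_12 (δ ℓ k : ℝ) (hδ : 4 ≤ δ) (hℓ : 2 ≤ ℓ) (hℓ' : ℓ ≤ δ / 2)
    (hk : (δ + 1) / 2 ≤ k) :
    0 ≤ ℓ + 0.5 - k / (δ + 0.5) - (ℓ * (δ + 1.5 - k) + 0.5 * k) / (δ + 2 - ℓ) := by
  have hA : (0:ℝ) < δ + 0.5 := by linarith
  have hB : (0:ℝ) < δ + 2 - ℓ := by linarith
  have key : 0 ≤ (ℓ + 0.5) * ((δ + 0.5) * (δ + 2 - ℓ)) - k * (δ + 2 - ℓ)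
      - (ℓ * (δ + 1.5 - k) + 0.5 * k) * (δ + 0.5) := by
    nlinarith [mul_nonneg (sub_nonneg.2 hℓ) (sub_nonneg.2 hℓ'),
      mul_nonneg (sub_nonneg.2 hk) (by linarith : (0:ℝ) ≤ ℓ - 1.5),
      mul_nonneg (sub_nonneg.2 hℓ) (by linarith : (0:ℝ) ≤ δ - 4),
      mul_nonneg (sub_nonneg.2 hℓ') (by linarith : (0:ℝ) ≤ δ - 4)]
  have h : ℓ + 0.5 - k / (δ + 0.5) - (ℓ * (δ + 1.5 - k) + 0.5 * k) / (δ + 2 - ℓ)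
      = ((ℓ + 0.5) * ((δ + 0.5) * (δ + 2 - ℓ)) - k * (δ + 2 - ℓ)
        - (ℓ * (δ + 1.5 - k) + 0.5 * k) * (δ + 0.5)) / ((δ + 0.5) * (δ + 2 - ℓ)) := by
    field_simp
  rw [h]
  exact div_nonneg key (mul_pos hA hB).le
end

section
/- Let n, r, k be positive reals with r ≥ 3, k ≤ r − 2, and define e_{n,r}(n', k) = (1 − 1/k)(n − n')²/2 + (1 − 1/(r−k))n'²/2 − n'/4 + (n − n')n'. Then for all 0 ≤ n' ≤ n, e_{n,r}(n', k) ≤ (1 − 1/r)n²/2 − n/(2r) + 1. -/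
theorem stmt_15 (n r k n' : ℝ) (hn : 0 ≤ n) (hr : 3 ≤ r) (hk1 : 1 ≤ k)
    (hk2 : k ≤ r - 2) (hn'0 : 0 ≤ n') (hn'n : n' ≤ n) :
    (1 - 1 / k) * (n - n') ^ 2 / 2 + (1 - 1 / (r - k)) * n' ^ 2 / 2 - n' / 4
      + (n - n') * n' ≤ (1 - 1 / r) * n ^ 2 / 2 - n / (2 * r) + 1 := by
  have hk0 : (0:ℝ) < k := by linarith
  have hrk0 : (0:ℝ) < r - k := by linarith
  have hr0 : (0:ℝ) < r := by linarith
  rw [← sub_nonneg]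
  have key : 0 ≤ ((1 - 1 / r) * n ^ 2 / 2 - n / (2 * r) + 1 -
      ((1 - 1 / k) * (n - n') ^ 2 / 2 + (1 - 1 / (r - k)) * n' ^ 2 / 2 - n' / 4
        + (n - n') * n')) * (32 * k * (r - k) * r) := by
    have expand : ((1 - 1 / r) * n ^ 2 / 2 - n / (2 * r) + 1 -
      ((1 - 1 / k) * (n - n') ^ 2 / 2 + (1 - 1 / (r - k)) * n' ^ 2 / 2 - n' / 4
        + (n - n') * n')) * (32 * k * (r - k) * r) =
      16 * (r - k) * (n - n') ^ 2 * r + 16 * k * n' ^ 2 * r - 16 * k * (r - k) * n ^ 2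
        - 16 * k * (r - k) * n + 8 * k * (r - k) * n' * r + 32 * k * (r - k) * r := by
      field_simp
      ring
    rw [expand]
    rcases le_or_gt k (4 * n) with hc | hc
    · nlinarith [sq_nonneg (4 * n' * r - 4 * n * (r - k) + k * (r - k)),
        mul_nonneg (mul_nonneg (by linarith : (0:ℝ) ≤ 4 * n - k) (by linarith : (0:ℝ) ≤ r - k - 2)) hrk0.le,
        mul_pos hk0 hrk0, mul_pos hrk0 hr0, mul_pos hk0 hr0,
        mul_nonneg (mul_nonneg hk0.le hrk0.le) (by linarith : (0:ℝ) ≤ r - k)]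
    · nlinarith [mul_nonneg (mul_nonneg (mul_nonneg hn'0 (by linarith : (0:ℝ) ≤ k - 4 * n)) hrk0.le) hr0.le,
        mul_nonneg (sq_nonneg n') (mul_pos hr0 hr0).le,
        sq_nonneg ((r - k) * n),
        mul_nonneg (mul_nonneg hk0.le hrk0.le) (by linarith : (0:ℝ) ≤ 2 * r - n)]
  have hpos : (0:ℝ) < 32 * k * (r - k) * r := by positivity
  exact (mul_nonneg_iff_of_pos_right hpos).mp key
end

section
/- For integers ℓ ≥ 1, δ ≥ 1, k ≥ 1 with |K| = k, let g(x₁, …, x_{ℓk}) = ∑_i (x_i(δ + 3/2 − k) + k/2)/(k(δ + 2 − x_i)), defined for real x_i with x_i < δ + 2 and k ≤ δ + 3/2. If 1 ≤ x₁ ≤ x₂ ≤ δ, then g(x₁ − 1, x₂ + 1, x₃, …, x_{ℓk}) > g(x₁, …, x_{ℓk}). -/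
/-! Each summand is a Möbius function of its variable,
`(t a + k/2) / (k (c - t)) = B / (k (c - t)) - a / k` with `c = δ + 2`, `a = δ + 3/2 - k`
and `B = a c + k/2 = (δ + 3/2)(δ + 2 - k) > 0`. So it is a positive multiple of the strictly
convex `t ↦ (c - t)⁻¹` plus a constant, and pushing two arguments `x i ≤ x j` apart by `1`
strictly increases the sum of its values; all other summands are unchanged. -/

lemma inv_add_inv_lt_inv_sub_add_inv_add {u v d : ℝ} (hd : 0 < d) (hu : d < u) (huv : u ≤ v) :
    u⁻¹ + v⁻¹ < (u - d)⁻¹ + (v + d)⁻¹ := by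
  have hu0 : 0 < u := hd.trans hu
  have hud : 0 < u - d := sub_pos.2 hu
  have hvd : 0 < v + d := by linarith
  have hv0 : 0 < v := by linarith
  have hprod : (u - d) * u < v * (v + d) := by nlinarith
  calc u⁻¹ + v⁻¹ = (u - d)⁻¹ + (v + d)⁻¹ - (d / ((u - d) * u) - d / (v * (v + d))) := by
        field_simp; ring
    _ < (u - d)⁻¹ + (v + d)⁻¹ := by
        have : d / (v * (v + d)) < d / ((u - d) * u) :=
          div_lt_div_of_pos_left hd (by positivity) hprod
        linarith

lemma div_mul_sub_eq_mul_inv_sub {a q c k t : ℝ} (hk : k ≠ 0) (ht : t ≠ c) :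
    (t * a + q) / (k * (c - t)) = (a * c + q) / k * (c - t)⁻¹ - a / k := by
  have : c - t ≠ 0 := sub_ne_zero.2 ht.symm
  field_simp
  ring

lemma div_mul_sub_add_lt_of_spread {a q c k s t d : ℝ} (hk : 0 < k) (hB : 0 < a * c + q)
    (hd : 0 < d) (hst : s ≤ t) (ht : t + d < c) :
    let φ : ℝ → ℝ := fun x => (x * a + q) / (k * (c - x))
    φ s + φ t < φ (s - d) + φ (t + d) := by
  intro φ
  have hφ : ∀ x, x < c → φ x = (a * c + q) / k * (c - x)⁻¹ - a / k := fun x hx =>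
    div_mul_sub_eq_mul_inv_sub hk.ne' hx.ne
  have hconv := inv_add_inv_lt_inv_sub_add_inv_add hd (u := c - t) (v := c - s)
    (by linarith) (by linarith)
  rw [hφ s (by linarith), hφ t (by linarith), hφ (s - d) (by linarith), hφ (t + d) ht,
    show c - (s - d) = c - s + d by ring, show c - (t + d) = c - t - d by ring]
  have := mul_lt_mul_of_pos_left hconv (div_pos hB hk)
  linarith

lemma Finset.sum_lt_sum_update_update {ι M : Type*} [Fintype ι] [DecidableEq ι]
    [AddCommMonoid M] [PartialOrder M] [IsOrderedCancelAddMonoid M] {α : Type*}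
    (f : α → M) (x : ι → α) {i j : ι} (hij : i ≠ j) {a b : α}
    (h : f (x i) + f (x j) < f a + f b) :
    ∑ m, f (x m) < ∑ m, f (Function.update (Function.update x i a) j b m) := by
  rw [← Finset.add_sum_erase _ _ (Finset.mem_univ i),
    ← Finset.add_sum_erase _ _ (Finset.mem_erase.2 ⟨hij.symm, Finset.mem_univ j⟩),
    ← Finset.add_sum_erase _ _ (Finset.mem_univ i),
    ← Finset.add_sum_erase _ _ (Finset.mem_erase.2 ⟨hij.symm, Finset.mem_univ j⟩),
    ← add_assoc, ← add_assoc]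
  have hrest : ∀ m ∈ ((Finset.univ.erase i).erase j),
      f (Function.update (Function.update x i a) j b m) = f (x m) := by
    intro m hm
    simp only [Finset.mem_erase] at hm
    rw [Function.update_of_ne hm.1, Function.update_of_ne hm.2.1]
  rw [Finset.sum_congr rfl hrest, Function.update_of_ne hij, Function.update_self,
    Function.update_self]
  exact add_lt_add_left h _

theorem stmt_17_general (ℓ δ k : ℕ) (hk : 1 ≤ k)
    (hkδ : (k : ℝ) < (δ : ℝ) + 3 / 2)
    (x : Fin (ℓ * k) → ℝ)
    (i j : Fin (ℓ * k)) (hij : i ≠ j)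
    (h12 : x i ≤ x j) (h2 : x j ≤ (δ : ℝ)) :
    (∑ m, (x m * ((δ : ℝ) + 3 / 2 - k) + k / 2) / (k * ((δ : ℝ) + 2 - x m))) <
      ∑ m, ((Function.update (Function.update x i (x i - 1)) j (x j + 1)) m *
          ((δ : ℝ) + 3 / 2 - k) + k / 2) /
        (k * ((δ : ℝ) + 2 - (Function.update (Function.update x i (x i - 1)) j (x j + 1)) m)) := by
  have hk0 : (0 : ℝ) < k := by exact_mod_cast hk
  have hB : 0 < ((δ : ℝ) + 3 / 2 - k) * (δ + 2) + k / 2 := by nlinarith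
  exact Finset.sum_lt_sum_update_update
    (fun t => (t * ((δ : ℝ) + 3 / 2 - k) + k / 2) / (k * ((δ : ℝ) + 2 - t))) x hij
    (div_mul_sub_add_lt_of_spread hk0 hB one_pos h12 (by linarith))

theorem stmt_17 (ℓ δ k : ℕ) (hℓ : 1 ≤ ℓ) (hδ : 1 ≤ δ) (hk : 1 ≤ k)
    (hkδ : (k : ℝ) < (δ : ℝ) + 3 / 2)
    (x : Fin (ℓ * k) → ℝ) (hx : ∀ i, x i < (δ : ℝ) + 2)
    (i j : Fin (ℓ * k)) (hij : i ≠ j)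
    (h1 : 1 ≤ x i) (h12 : x i ≤ x j) (h2 : x j ≤ (δ : ℝ)) :
    (∑ m, (x m * ((δ : ℝ) + 3 / 2 - k) + k / 2) / (k * ((δ : ℝ) + 2 - x m))) <
      ∑ m, ((Function.update (Function.update x i (x i - 1)) j (x j + 1)) m *
          ((δ : ℝ) + 3 / 2 - k) + k / 2) /
        (k * ((δ : ℝ) + 2 - (Function.update (Function.update x i (x i - 1)) j (x j + 1)) m)) :=
  stmt_17_general ℓ δ k hk hkδ x i j hij h12 h2
end
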